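/- arXiv:1310.7288 — 8 statements merged into one kernel-verified Lean document; each statement's English description precedes it below -/
import Mathlib

section
/- For any binary string s of length n that begins with a maximal run of length k (i.e., s_0 = s_1 = ... = s_{k-1} and, if k < n, s_k ≠ s_0), the number of distinct subsequences of s of length m (for m ≥ 1) equals the number of distinct subsequences of length m−1 of the suffix s[1:n] plus the number of distinct subsequences of length m−1 of the suffix s[k+1:n] (the latter term being 0 if k = n). -/
/-!
Sort the length-`m` subsequences of `s` by their first letter. Those starting with `s₀` are `s₀`
followed by any subsequence of `s[1:n]`. A subsequence starting with the other letter `¬s₀` can be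
embedded greedily, so its first letter may be matched at the first `¬s₀` of `s`, which is `s_k`;
its remaining letters then form an arbitrary subsequence of `s[k+1:n]`, and there is none if `k = n`.
-/

/-- Number of distinct subsequences of `s` of length `m`. -/
def countM (s : List Bool) (m : ℕ) : ℕ :=
  ((s.sublists.filter (fun t => t.length == m)).dedup).length

namespace List

variable {α : Type*} {s l r t u : List α} {c : α} {m : ℕ}

theorem cons_sublist_append_of_notMem (h : c ∉ r) : (c :: u) <+ r ++ l ↔ (c :: u) <+ l := by
  induction r with
  | nil => rfl
  | cons x r ih =>
    rw [mem_cons, not_or] at h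
    simp [sublist_cons_iff, h.1, ih h.2]

theorem notMem_take_of_getD_eq {k : ℕ} {d x : α} (hrun : ∀ i < k, s.getD i d = x) (hc : c ≠ x) :
    c ∉ s.take k := by
  rw [mem_take_iff_getElem]
  rintro ⟨j, hj, rfl⟩
  rw [lt_min_iff] at hj
  exact hc (getD_eq_getElem _ _ hj.2 ▸ hrun j hj.1)

variable [DecidableEq α]

def subseqs (s : List α) (m : ℕ) : Finset (List α) :=
  (s.sublists.filter (fun t => t.length == m)).toFinset

def subseqsAfter (c : α) (s : List α) (m : ℕ) : Finset (List α) :=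
  (subseqs s m).filter (fun u => (c :: u) <+ s)

@[simp]
theorem mem_subseqs : t ∈ subseqs s m ↔ t <+ s ∧ t.length = m := by
  simp [subseqs]

@[simp]
theorem mem_subseqsAfter : u ∈ subseqsAfter c s m ↔ (c :: u) <+ s ∧ u.length = m := by
  simp only [subseqsAfter, Finset.mem_filter, mem_subseqs]
  exact ⟨fun ⟨⟨_, hu⟩, h⟩ => ⟨h, hu⟩, fun ⟨h, hu⟩ => ⟨⟨(sublist_cons_self c u).trans h, hu⟩, h⟩⟩

theorem subseqs_succ [Fintype α] :
    subseqs s (m + 1) = Finset.univ.biUnion fun c => (subseqsAfter c s m).image (cons c) := by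
  ext t
  cases t <;> simp

theorem card_subseqs_succ [Fintype α] :
    (subseqs s (m + 1)).card = ∑ c, (subseqsAfter c s m).card := by
  rw [subseqs_succ, Finset.card_biUnion]
  · simp only [Finset.card_image_of_injective _ cons_injective]
  · intro c _ d _ hcd
    simp only [Function.onFun, Finset.disjoint_left, Finset.mem_image]
    rintro _ ⟨u, _, rfl⟩ ⟨v, _, h⟩
    exact hcd (head_eq_of_cons_eq h).symm

@[simp]
theorem subseqsAfter_nil : subseqsAfter c [] m = ∅ := by
  ext u; simp

@[simp]
theorem subseqsAfter_cons_self : subseqsAfter c (c :: l) m = subseqs l m := by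
  ext u; simp

theorem subseqsAfter_append_of_notMem (h : c ∉ r) :
    subseqsAfter c (r ++ l) m = subseqsAfter c l m := by
  ext u; simp [cons_sublist_append_of_notMem h]

end List

theorem countM_eq_card_subseqs (s : List Bool) (m : ℕ) : countM s m = (s.subseqs m).card :=
  (List.card_toFinset _).symm

theorem Fintype.sum_bool_eq_add_not {M : Type*} [AddCommMonoid M] (f : Bool → M) (a : Bool) :
    ∑ b, f b = f a + f (!a) := by
  cases a <;> simp [add_comm]

open List in
theorem stmt_0 (n k m : ℕ) (s : List Bool) (hs : s.length = n)
    (hk1 : 1 ≤ k) (hkn : k ≤ n) (hm : 1 ≤ m)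
    (hrun : ∀ i < k, s.getD i false = s.getD 0 false)
    (hmax : k < n → s.getD k false ≠ s.getD 0 false) :
    countM s m =
      countM (s.drop 1) (m - 1) +
        (if k = n then 0 else countM (s.drop (k + 1)) (m - 1)) := by
  subst hs
  obtain ⟨a, l, rfl⟩ := exists_cons_of_ne_nil (ne_nil_of_length_pos (hk1.trans hkn))
  obtain ⟨m, rfl⟩ := Nat.exists_eq_add_of_le' hm
  have hskip : subseqsAfter (!a) (a :: l) m = subseqsAfter (!a) ((a :: l).drop k) m := by
    conv_lhs => rw [← take_append_drop k (a :: l)]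
    exact subseqsAfter_append_of_notMem (notMem_take_of_getD_eq hrun (by simp))
  simp only [countM_eq_card_subseqs, card_subseqs_succ, Fintype.sum_bool_eq_add_not _ a,
    subseqsAfter_cons_self, hskip, drop_one, tail_cons, Nat.add_sub_cancel]
  split_ifs with hkn'
  · simp [hkn']
  · have hk : k < (a :: l).length := lt_of_le_of_ne hkn hkn'
    have hnext : (a :: l)[k] = !a := by
      rw [Bool.eq_not_iff, ← getD_eq_getElem _ false hk]
      exact hmax hk
    rw [drop_eq_getElem_cons hk, hnext, subseqsAfter_cons_self]
end

section
/- For any binary string s of length n ≥ 1 beginning with a maximal run of length k, the total number of distinct subsequences of s (including the empty subsequence) equals 1 plus the total number of distinct subsequences of s[1:n] plus the total number of distinct subsequences of s[k+1:n] (the last term being 0 if k = n). -/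
/-!
Classify the nonempty subsequences of `s = b^k (!b) r` by their first letter. Those starting
with `b` are `b :: u` for the subsequences `u` of `s[1:]`. Those starting with `!b` can be
embedded greedily, matching that letter at its first occurrence, position `k`; so they are
`!b :: u` for the subsequences `u` of `r = s[k+1:]`, and there are none when `k = n`.
-/

/-- Total number of distinct subsequences of `s` (including the empty subsequence). -/
def countAll (s : List Bool) : ℕ := (s.sublists.dedup).length

theorem List.take_eq_replicate_of_forall_getD {α : Type*} {l : List α} {k : ℕ} {d a : α}
    (hk : k ≤ l.length) (h : ∀ i < k, l.getD i d = a) : l.take k = List.replicate k a := by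
  refine List.eq_replicate_iff.mpr ⟨by simp [hk], fun x hx => ?_⟩
  obtain ⟨i, hi, rfl⟩ := List.getElem_of_mem hx
  rw [List.length_take] at hi
  rw [List.getElem_take, ← List.getD_eq_getElem _ d]
  exact h i (by omega)

theorem List.cons_sublist_append_cons_iff {α : Type*} {a : α} {l₁ r u : List α}
    (h : a ∉ l₁) : (a :: u).Sublist (l₁ ++ a :: r) ↔ u.Sublist r := by
  induction l₁ with
  | nil => exact List.cons_sublist_cons
  | cons x l₁ ih =>
    rw [List.mem_cons, not_or] at h
    rw [List.cons_append, List.sublist_cons_iff, ih h.2]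
    simp [h.1]

theorem countAll_eq_card (s : List Bool) : countAll s = s.sublists.toFinset.card :=
  (List.card_toFinset _).symm

theorem countAll_cons (b : Bool) (m : List Bool) (T : Finset (List Bool))
    (hT : ∀ u, ((!b) :: u).Sublist m ↔ u ∈ T) :
    countAll (b :: m) = 1 + countAll m + T.card := by
  let consWith (x : Bool) : List Bool ↪ List Bool := ⟨(x :: ·), List.cons_injective⟩
  have hset : (b :: m).sublists.toFinset =
      insert [] (m.sublists.toFinset.map (consWith b) ∪ T.map (consWith !b)) := by
    ext t
    rcases t with _ | ⟨x, u⟩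
    · simp
    · rcases x.eq_or_eq_not b with rfl | rfl
      · simp [consWith]
      · simp [consWith, List.sublist_cons_iff, hT]
  have hdisj : Disjoint (m.sublists.toFinset.map (consWith b)) (T.map (consWith !b)) := by
    simp [Finset.disjoint_left, consWith]
  rw [countAll_eq_card, countAll_eq_card, hset, Finset.card_insert_of_notMem (by simp [consWith]),
    Finset.card_union_of_disjoint hdisj, Finset.card_map, Finset.card_map]
  omega

theorem stmt_1_general (n k : ℕ) (s : List Bool) (hs : s.length = n)
    (hk1 : 1 ≤ k) (hkn : k ≤ n)
    (hrun : ∀ i < k, s.getD i false = s.getD 0 false)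
    (hmax : k < n → s.getD k false ≠ s.getD 0 false) :
    countAll s =
      1 + countAll (s.drop 1) +
        (if k = n then 0 else countAll (s.drop (k + 1))) := by
  set b := s.getD 0 false
  obtain ⟨j, rfl⟩ : ∃ j, k = j + 1 := ⟨k - 1, by omega⟩
  have hsplit : s = b :: (List.replicate j b ++ s.drop (j + 1)) := by
    rw [← List.cons_append, ← List.replicate_succ,
      ← List.take_eq_replicate_of_forall_getD (hs ▸ hkn) hrun, List.take_append_drop]
  have hnot : (!b) ∉ List.replicate j b := by simp [List.mem_replicate]
  have htail : s.drop 1 = List.replicate j b ++ s.drop (j + 1) := by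
    conv_lhs => rw [hsplit]
    rfl
  conv_lhs => rw [hsplit]
  rw [htail]
  split_ifs with hjn
  · have hrest : s.drop (j + 1) = [] := List.drop_eq_nil_of_le (by omega)
    rw [hrest, List.append_nil, countAll_cons b _ ∅ fun u => ?_, Finset.card_empty]
    simpa using fun h => hnot (h.subset List.mem_cons_self)
  · obtain ⟨hlt, hne⟩ : j + 1 < s.length ∧ s.getD (j + 1) false ≠ b :=
      ⟨by omega, hmax (by omega)⟩
    have hrest : s.drop (j + 1) = (!b) :: s.drop (j + 2) := by
      rw [List.drop_eq_getElem_cons hlt, ← List.getD_eq_getElem _ false, Bool.eq_not.mpr hne]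
    rw [hrest, countAll_cons b _ (s.drop (j + 2)).sublists.toFinset fun u => by
      rw [List.cons_sublist_append_cons_iff hnot, List.mem_toFinset, List.mem_sublists],
      ← countAll_eq_card]

theorem stmt_1 (n k : ℕ) (s : List Bool) (hs : s.length = n) (hn : 1 ≤ n)
    (hk1 : 1 ≤ k) (hkn : k ≤ n)
    (hrun : ∀ i < k, s.getD i false = s.getD 0 false)
    (hmax : k < n → s.getD k false ≠ s.getD 0 false) :
    countAll s =
      1 + countAll (s.drop 1) +
        (if k = n then 0 else countAll (s.drop (k + 1))) :=
  stmt_1_general n k s hs hk1 hkn hrun hmax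
end

section
/- Let T(n,m) denote the sum, over all 2^n binary strings s of length n, of the number of distinct length-m subsequences of s. Then for 1 ≤ m ≤ n−1, T(n,m) = 2·T(n−1,m−1) + T(n−1,m). -/
/-- Sum over all binary strings of length `n` of the number of distinct
length-`m` subsequences. -/
def T (n m : ℕ) : ℕ := ∑ f : Fin n → Bool, countM (List.ofFn f) m

/-!
A length-`(j+1)` subsequence of `a :: s` is either a subsequence of `s` or `a` followed by a
length-`j` subsequence of `s`; the two kinds overlap exactly in the subsequences of `s` that
start with `a`. Summed over the letters `a`, these overlaps partition the length-`(j+1)`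
subsequences of `s`, so `∑ₐ C(a :: s, j+1) = (|α| - 1) C(s, j+1) + |α| C(s, j)`. Summing this
over all `s` of length `n - 1` gives the recurrence for binary strings.
-/

open Finset

section Subsequences

variable {α : Type*} [DecidableEq α]

def sublistsLenFinset (s : List α) (m : ℕ) : Finset (List α) :=
  (s.sublistsLen m).toFinset

theorem mem_sublistsLenFinset {s t : List α} {m : ℕ} :
    t ∈ sublistsLenFinset s m ↔ t.Sublist s ∧ t.length = m := by
  simp [sublistsLenFinset, List.mem_sublistsLen]

theorem sublistsLenFinset_cons_succ (a : α) (s : List α) (j : ℕ) :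
    sublistsLenFinset (a :: s) (j + 1) =
      sublistsLenFinset s (j + 1) ∪ (sublistsLenFinset s j).image (List.cons a) := by
  rw [sublistsLenFinset, List.sublistsLen_succ_cons, List.toFinset_append]
  ext
  simp [sublistsLenFinset]

theorem sublistsLenFinset_inter_image_cons (a : α) (s : List α) (j : ℕ) :
    sublistsLenFinset s (j + 1) ∩ (sublistsLenFinset s j).image (List.cons a) =
      (sublistsLenFinset s (j + 1)).filter (fun t => t.head? = some a) := by
  ext t
  simp only [mem_inter, mem_image, mem_filter, mem_sublistsLenFinset]
  constructor
  · rintro ⟨h, r, -, rfl⟩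
    exact ⟨h, rfl⟩
  · rintro ⟨⟨hsub, hlen⟩, hhead⟩
    obtain ⟨r, rfl⟩ : ∃ r, t = a :: r := by
      cases t with
      | nil => simp at hhead
      | cons b r => exact ⟨r, by simpa using hhead⟩
    exact ⟨⟨hsub, hlen⟩, r, ⟨(List.sublist_cons_self a r).trans hsub, by simpa using hlen⟩, rfl⟩

theorem card_sublistsLenFinset_cons_succ_add (a : α) (s : List α) (j : ℕ) :
    #(sublistsLenFinset (a :: s) (j + 1)) +
        #((sublistsLenFinset s (j + 1)).filter (fun t => t.head? = some a)) =
      #(sublistsLenFinset s (j + 1)) + #(sublistsLenFinset s j) := by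
  rw [sublistsLenFinset_cons_succ, ← sublistsLenFinset_inter_image_cons,
    card_union_add_card_inter, card_image_of_injective _ List.cons_injective]

variable [Fintype α]

theorem sum_card_filter_head_sublistsLenFinset_succ (s : List α) (j : ℕ) :
    ∑ a : α, #((sublistsLenFinset s (j + 1)).filter (fun t => t.head? = some a)) =
      #(sublistsLenFinset s (j + 1)) := by
  have hhead : ∀ t ∈ sublistsLenFinset s (j + 1), t.head? ∈ univ.map Function.Embedding.some := by
    intro t ht
    obtain ⟨b, r, rfl⟩ := List.exists_cons_of_length_eq_add_one (mem_sublistsLenFinset.1 ht).2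
    simp
  rw [card_eq_sum_card_fiberwise hhead, sum_map]
  simp only [Function.Embedding.some_apply]

theorem sum_card_sublistsLenFinset_cons_succ_add (s : List α) (j : ℕ) :
    ∑ a : α, #(sublistsLenFinset (a :: s) (j + 1)) + #(sublistsLenFinset s (j + 1)) =
      Fintype.card α * (#(sublistsLenFinset s (j + 1)) + #(sublistsLenFinset s j)) := by
  conv_lhs => rw [← sum_card_filter_head_sublistsLenFinset_succ s j, ← sum_add_distrib]
  simp [card_sublistsLenFinset_cons_succ_add]

end Subsequences

theorem countM_eq_card_sublistsLenFinset (s : List Bool) (m : ℕ) :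
    countM s m = #(sublistsLenFinset s m) := by
  rw [countM, ← List.card_toFinset]
  congr 1
  ext t
  simp [mem_sublistsLenFinset]

theorem T_succ (k m : ℕ) :
    T (k + 1) m = ∑ f : Fin k → Bool, ∑ a : Bool, countM (a :: List.ofFn f) m := by
  rw [T, ← (Fin.consEquiv fun _ => Bool).sum_comp, Fintype.sum_prod_type, sum_comm]
  simp [Fin.consEquiv, List.ofFn_succ]

theorem T_succ_succ_add (k j : ℕ) :
    T (k + 1) (j + 1) + T k (j + 1) = 2 * (T k (j + 1) + T k j) := by
  rw [T_succ]
  simp only [T, countM_eq_card_sublistsLenFinset, ← sum_add_distrib, mul_sum]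
  refine sum_congr rfl fun f _ => ?_
  simpa using sum_card_sublistsLenFinset_cons_succ_add (List.ofFn f) j

theorem stmt_2_general (n m : ℕ) (hm : 1 ≤ m) (hn : 1 ≤ n) :
    T n m = 2 * T (n - 1) (m - 1) + T (n - 1) m := by
  obtain ⟨k, rfl⟩ : ∃ k, n = k + 1 := ⟨n - 1, by omega⟩
  obtain ⟨j, rfl⟩ : ∃ j, m = j + 1 := ⟨m - 1, by omega⟩
  have := T_succ_succ_add k j
  simp only [Nat.add_sub_cancel]
  omega

theorem stmt_2 (n m : ℕ) (hm : 1 ≤ m) (hmn : m ≤ n - 1) (hn : 1 ≤ n) :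
    T n m = 2 * T (n - 1) (m - 1) + T (n - 1) m :=
  stmt_2_general n m hm hn
end

section
/- For any binary string s, the number of distinct subsequences of s obtained by deleting exactly one bit equals the number of maximal runs of s. -/
/-- Number of maximal runs in a binary string. -/
def runs (s : List Bool) : ℕ := (s.destutter (· ≠ ·)).length

/-!
Split the one-bit deletions of `a :: t` by whether the first bit is deleted: deleting it gives `t`,
keeping it gives `a :: u` for a one-bit deletion `u` of `t`. The second family is in bijection with
the deletions of `t`, and it already contains `t` exactly when `t` starts with `a`. So the count
grows by one precisely when a new run begins, which is also how the number of runs grows.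
-/

namespace List

variable {α : Type*} [DecidableEq α]

def oneDeletions (s : List α) : Finset (List α) :=
  (s.sublists.filter (fun t => t.length == s.length - 1)).toFinset

theorem mem_oneDeletions {s u : List α} :
    u ∈ oneDeletions s ↔ u <+ s ∧ u.length = s.length - 1 := by
  simp [oneDeletions, mem_sublists]

theorem tail_mem_oneDeletions (a : α) (t : List α) : t ∈ oneDeletions (a :: t) :=
  mem_oneDeletions.mpr ⟨sublist_cons_self a t, by simp⟩

theorem oneDeletions_cons (a : α) {t : List α} (ht : t ≠ []) :
    oneDeletions (a :: t) = insert t ((oneDeletions t).map ⟨(a :: ·), cons_injective⟩) := by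
  have ht : t.length ≠ 0 := by simpa using ht
  ext u
  simp only [mem_oneDeletions, Finset.mem_insert, Finset.mem_map, Function.Embedding.coeFn_mk,
    length_cons, Nat.add_sub_cancel]
  constructor
  · rintro ⟨hsub, hlen⟩
    rcases sublist_cons_iff.mp hsub with hsub | ⟨r, rfl, hr⟩
    · exact .inl (hsub.eq_of_length hlen)
    · exact .inr ⟨r, ⟨hr, by simp only [length_cons] at hlen; omega⟩, rfl⟩
  · rintro (rfl | ⟨v, ⟨hv, hvlen⟩, rfl⟩)
    · exact ⟨sublist_cons_self a u, rfl⟩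
    · exact ⟨hv.cons_cons a, by simp only [length_cons]; omega⟩

theorem mem_map_cons_oneDeletions_iff (a b : α) (l : List α) :
    b :: l ∈ (oneDeletions (b :: l)).map ⟨(a :: ·), cons_injective⟩ ↔ a = b := by
  simp only [Finset.mem_map, Function.Embedding.coeFn_mk]
  constructor
  · rintro ⟨v, -, hv⟩
    exact (cons_eq_cons.mp hv).1
  · rintro rfl
    exact ⟨l, tail_mem_oneDeletions a l, rfl⟩

theorem card_oneDeletions_cons_cons (a b : α) (l : List α) :
    (oneDeletions (a :: b :: l)).card =
      (oneDeletions (b :: l)).card + if a = b then 0 else 1 := by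
  rw [oneDeletions_cons a (cons_ne_nil b l)]
  split_ifs with hab
  · rw [Finset.insert_eq_of_mem ((mem_map_cons_oneDeletions_iff a b l).mpr hab), Finset.card_map,
      Nat.add_zero]
  · rw [Finset.card_insert_of_notMem (mt (mem_map_cons_oneDeletions_iff a b l).mp hab),
      Finset.card_map]

theorem length_destutter_ne_cons_cons (a b : α) (l : List α) :
    ((a :: b :: l).destutter (· ≠ ·)).length =
      ((b :: l).destutter (· ≠ ·)).length + if a = b then 0 else 1 := by
  rw [destutter_cons_cons, destutter_cons']
  by_cases hab : a = b
  · subst hab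
    simp
  · simp [hab]

theorem card_oneDeletions_eq_length_destutter :
    ∀ {s : List α}, s ≠ [] → (oneDeletions s).card = (s.destutter (· ≠ ·)).length
  | [a], _ => by simp [oneDeletions]
  | a :: b :: l, _ => by
    rw [card_oneDeletions_cons_cons, length_destutter_ne_cons_cons,
      card_oneDeletions_eq_length_destutter (cons_ne_nil b l)]

end List

theorem stmt_5 (s : List Bool) (hs : s ≠ []) :
    countM s (s.length - 1) = runs s := by
  rw [countM, ← List.card_toFinset]
  exact List.card_oneDeletions_eq_length_destutter hs
end

section
/- The sum over all 2^n binary strings s of length n of the total number of distinct subsequences of s (including the empty subsequence) equals 2·3^n − 2^n. Equivalently, the expected total number of distinct subsequences of a uniformly random binary string of length n is 2·(3/2)^n − 1. -/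
open Finset

namespace List

variable {α : Type*} [DecidableEq α]

theorem sublists_toFinset_cons (a : α) (l : List α) :
    (a :: l).sublists.toFinset = l.sublists.toFinset ∪ l.sublists.toFinset.image (a :: ·) := by
  ext t
  simp only [mem_union, mem_image, mem_toFinset, mem_sublists, sublist_cons_iff]
  grind

theorem sublists_toFinset_inter_image_cons (a : α) (l : List α) :
    l.sublists.toFinset ∩ l.sublists.toFinset.image (a :: ·)
      = {t ∈ l.sublists.toFinset | t.head? = some a} := by
  ext t
  simp only [Finset.mem_inter, mem_image, Finset.mem_filter, mem_toFinset, mem_sublists]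
  constructor
  · rintro ⟨ht, r, -, rfl⟩
    exact ⟨ht, rfl⟩
  · rintro ⟨ht, hhead⟩
    obtain ⟨r, rfl⟩ : ∃ r, t = a :: r := by
      cases t <;> simp_all
    exact ⟨ht, r, (sublist_cons_self a r).trans ht, rfl⟩

theorem card_sublists_toFinset_cons_add_card_filter_head (a : α) (l : List α) :
    #(a :: l).sublists.toFinset + #{t ∈ l.sublists.toFinset | t.head? = some a}
      = 2 * #l.sublists.toFinset := by
  rw [sublists_toFinset_cons, ← sublists_toFinset_inter_image_cons,
    card_union_add_card_inter, card_image_of_injective _ cons_injective, two_mul]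

theorem card_sublists_toFinset_eq_one_add_sum [Fintype α] (l : List α) :
    #l.sublists.toFinset = 1 + ∑ a, #{t ∈ l.sublists.toFinset | t.head? = some a} := by
  rw [card_eq_sum_card_fiberwise (f := head?) (t := univ) (fun _ _ => mem_univ _),
    Fintype.sum_option]
  congr 1
  rw [card_eq_one]
  refine ⟨[], ?_⟩
  ext t
  simp only [Finset.mem_filter, mem_toFinset, mem_sublists, head?_eq_none_iff,
    Finset.mem_singleton]
  exact ⟨And.right, fun h => ⟨h ▸ nil_sublist l, h⟩⟩

theorem sum_card_sublists_toFinset_cons [Fintype α] (l : List α) :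
    ∑ a, #(a :: l).sublists.toFinset + #l.sublists.toFinset
      = 2 * Fintype.card α * #l.sublists.toFinset + 1 := by
  have h := Finset.sum_congr rfl fun a (_ : a ∈ univ) =>
    card_sublists_toFinset_cons_add_card_filter_head a l
  rw [sum_add_distrib, ← mul_sum, sum_const, card_univ, smul_eq_mul] at h
  have := card_sublists_toFinset_eq_one_add_sum l
  grind

end List

theorem Fin.sum_univ_fun_succ {α M : Type*} [Fintype α] [AddCommMonoid M] (n : ℕ)
    (g : (Fin (n + 1) → α) → M) :
    ∑ f, g f = ∑ f : Fin n → α, ∑ a, g (Fin.cons a f) := by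
  rw [← Fintype.sum_prod_type_right']
  exact (Fintype.sum_equiv (Fin.consEquiv fun _ => α) _ _ fun _ => rfl).symm

section OfFn

variable {α : Type*} [Fintype α] [DecidableEq α]

theorem sum_card_sublists_toFinset_ofFn_succ (n : ℕ) :
    ∑ f : Fin (n + 1) → α, #(List.ofFn f).sublists.toFinset
      + ∑ f : Fin n → α, #(List.ofFn f).sublists.toFinset
      = 2 * Fintype.card α * ∑ f : Fin n → α, #(List.ofFn f).sublists.toFinset
        + Fintype.card α ^ n := by
  simp only [Fin.sum_univ_fun_succ, List.ofFn_cons, ← sum_add_distrib,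
    List.sum_card_sublists_toFinset_cons]
  simp [sum_add_distrib, mul_sum]

theorem sum_card_sublists_toFinset_ofFn [Nonempty α] (n : ℕ) :
    (Fintype.card α - 1) * ∑ f : Fin n → α, #(List.ofFn f).sublists.toFinset
      + Fintype.card α ^ n = Fintype.card α * (2 * Fintype.card α - 1) ^ n := by
  obtain ⟨m, hm⟩ := Nat.exists_eq_add_one.mpr (Fintype.card_pos (α := α))
  induction n with
  | zero => simp [hm]
  | succ n ih =>
    have step := sum_card_sublists_toFinset_ofFn_succ (α := α) n
    rw [hm] at ih step ⊢
    simp only [Nat.add_sub_cancel] at ih ⊢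
    have hodd : 2 * (m + 1) - 1 = 2 * m + 1 := by omega
    rw [hodd] at ih ⊢
    linear_combination m * step + (2 * m + 1) * ih

end OfFn

theorem stmt_11 (n : ℕ) :
    (∑ f : Fin n → Bool, countAll (List.ofFn f)) = 2 * 3 ^ n - 2 ^ n ∧
    (∑ f : Fin n → Bool, (countAll (List.ofFn f) : ℚ)) / 2 ^ n
      = 2 * (3 / 2 : ℚ) ^ n - 1 := by
  have hsum : ∑ f : Fin n → Bool, countAll (List.ofFn f) + 2 ^ n = 2 * 3 ^ n := by
    simpa [countAll, ← List.card_toFinset] using sum_card_sublists_toFinset_ofFn (α := Bool) n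
  refine ⟨by omega, ?_⟩
  have hsumℚ : ∑ f : Fin n → Bool, (countAll (List.ofFn f) : ℚ) = 2 * 3 ^ n - 2 ^ n := by
    rw [eq_sub_iff_add_eq]
    exact_mod_cast hsum
  rw [hsumℚ, div_pow, sub_div, mul_div_assoc, div_self (by positivity)]
end

section
/- Let Σ(n) = Σ_{s ∈ {0,1}^n} |Subseq(s)| where Subseq(s) is the set of all distinct subsequences of s including the empty string. Then Σ satisfies the recurrence Σ(n) = 2^{n-1} + 3·Σ(n−1) for n ≥ 1, with Σ(0) = 1. -/
/-- Sum over all binary strings of length `n` of the total number of distinct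
subsequences. -/
def Sigma' (n : ℕ) : ℕ := ∑ f : Fin n → Bool, countAll (List.ofFn f)

open Finset

section Subseqs

variable {α : Type*} [DecidableEq α]

def subseqs (s : List α) : Finset (List α) := s.sublists.toFinset

@[simp]
lemma mem_subseqs {s t : List α} : t ∈ subseqs s ↔ t.Sublist s := by
  simp [subseqs]

lemma subseqs_cons (a : α) (s : List α) :
    subseqs (a :: s) = subseqs s ∪ (subseqs s).image (a :: ·) := by
  ext t
  simp only [mem_subseqs, mem_union, mem_image, List.sublist_cons_iff]
  tauto

lemma subseqs_inter_image_cons (a : α) (s : List α) :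
    subseqs s ∩ (subseqs s).image (a :: ·) = {t ∈ subseqs s | t.head? = some a} := by
  ext t
  simp only [mem_inter, mem_image, mem_filter, mem_subseqs]
  constructor
  · rintro ⟨ht, u, -, rfl⟩
    exact ⟨ht, rfl⟩
  · rintro ⟨ht, hhead⟩
    obtain ⟨u, rfl⟩ : ∃ u, t = a :: u := List.head?_eq_some_iff.mp hhead
    exact ⟨ht, u, (List.sublist_cons_self a u).trans ht, rfl⟩

lemma card_subseqs_cons_add (a : α) (s : List α) :
    #(subseqs (a :: s)) + #{t ∈ subseqs s | t.head? = some a} = 2 * #(subseqs s) := by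
  have hinj : #((subseqs s).image (a :: ·)) = #(subseqs s) :=
    card_image_of_injective _ List.cons_injective
  rw [subseqs_cons, ← subseqs_inter_image_cons, card_union_add_card_inter, hinj, two_mul]

lemma sum_card_filter_head_add_one [Fintype α] (s : List α) :
    ∑ a, #{t ∈ subseqs s | t.head? = some a} + 1 = #(subseqs s) := by
  have hnone : {t ∈ subseqs s | t.head? = none} = {[]} := by
    ext t
    simp only [mem_filter, mem_subseqs, List.head?_eq_none_iff, mem_singleton]
    exact ⟨And.right, fun h => ⟨h ▸ List.nil_sublist s, h⟩⟩
  rw [card_eq_sum_card_fiberwise (f := List.head?) (t := univ) (fun _ _ => mem_univ _),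
    Fintype.sum_option, hnone, card_singleton, add_comm]

lemma sum_card_subseqs_cons [Fintype α] (s : List α) :
    ∑ a, #(subseqs (a :: s)) + #(subseqs s) = 2 * Fintype.card α * #(subseqs s) + 1 := by
  have hcons := sum_congr rfl fun a (_ : a ∈ univ) => card_subseqs_cons_add a s
  rw [sum_add_distrib, ← mul_sum, sum_const, card_univ, smul_eq_mul] at hcons
  rw [← sum_card_filter_head_add_one s] at hcons ⊢
  linarith

end Subseqs

lemma countAll_eq_card_subseqs (s : List Bool) : countAll s = #(subseqs s) := by
  simp [countAll, subseqs, List.card_toFinset]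

lemma Sigma'_succ_eq_sum (m : ℕ) :
    Sigma' (m + 1) = ∑ f : Fin m → Bool, ∑ b, countAll (b :: List.ofFn f) := by
  rw [Sigma', sum_comm, ← Fintype.sum_prod_type']
  refine Fintype.sum_equiv (Fin.consEquiv fun _ => Bool).symm _ _ fun f => ?_
  rw [List.ofFn_succ]
  rfl

lemma Sigma'_succ (m : ℕ) : Sigma' (m + 1) = 2 ^ m + 3 * Sigma' m := by
  have hstep (s : List Bool) : ∑ b, countAll (b :: s) = 3 * countAll s + 1 := by
    have := sum_card_subseqs_cons s
    simp only [Fintype.card_bool, countAll_eq_card_subseqs] at this ⊢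
    omega
  rw [Sigma'_succ_eq_sum, Sigma']
  simp only [hstep, sum_add_distrib, ← mul_sum, sum_const, card_univ, Fintype.card_fun,
    Fintype.card_bool, Fintype.card_fin, smul_eq_mul, mul_one]
  ring

theorem stmt_12 :
    Sigma' 0 = 1 ∧ ∀ n : ℕ, 1 ≤ n → Sigma' n = 2 ^ (n - 1) + 3 * Sigma' (n - 1) := by
  refine ⟨rfl, fun n hn => ?_⟩
  obtain ⟨m, rfl⟩ := Nat.exists_eq_add_of_le' hn
  exact Sigma'_succ m
end

section
/- Define integers T(n,m) by T(n,0) = 2^n, T(n,n) = 2^n, and T(n,m) = 2·T(n−1,m−1) + T(n−1,m) for 1 ≤ m ≤ n−1. Then for every fixed m ≥ 0, T(n, n−m)/2^n is given by a polynomial in n of degree m whose leading coefficient is 1/(2^m · m!). -/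
/-!
Put `f n m = T n (n - m) / 2 ^ n`. The recurrence for `T` becomes
`f (n + 1) (m + 1) = f n (m + 1) + f n m / 2`, with `f n 0 = f n n = 1`. The polynomials
`P m x = ∑ j ≤ m, 2⁻¹ ^ j * (x - m + j - 1).choose j` satisfy the same relations:
`P m m = 1`, `P 0 = 1`, and the forward difference of `P (m + 1)` is `P m / 2`, because the
forward difference of `(y + j).choose (j + 1)` in `y` is `(y + j).choose j`. Hence
`f n m = P m n`, and the leading term of `P m` comes from `j = m` alone.
-/

open Polynomial Finset

open scoped Nat

lemma ascPochhammer_eval_sub_eval_sub_one {R : Type*} [CommRing R] (j : ℕ) (y : R) :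
    (ascPochhammer R (j + 1)).eval y - (ascPochhammer R (j + 1)).eval (y - 1)
      = (j + 1) * (ascPochhammer R j).eval y := by
  rw [ascPochhammer_succ_eval, ascPochhammer_succ_left, eval_mul, eval_X, eval_comp]
  simp only [eval_add, eval_X, eval_one, sub_add_cancel]
  ring

section

variable {K : Type*} [Field K]

lemma natDegree_ascPochhammer_comp_X_sub_C (j : ℕ) (c : K) :
    ((ascPochhammer K j).comp (X - C c)).natDegree = j := by
  rw [natDegree_comp, ascPochhammer_natDegree, natDegree_X_sub_C, mul_one]

/-- `(ascPochhammer K j).eval (x - m) / j!` is the binomial `(x - m + j - 1).choose j`. -/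
noncomputable def subseqPoly (a : K) (m : ℕ) : K[X] :=
  ∑ j ∈ range (m + 1), C (a ^ j / j !) * (ascPochhammer K j).comp (X - C (m : K))

lemma subseqPoly_eval (a : K) (m : ℕ) (x : K) :
    (subseqPoly a m).eval x
      = ∑ j ∈ range (m + 1), a ^ j / j ! * (ascPochhammer K j).eval (x - m) := by
  simp [subseqPoly, eval_finsetSum]

lemma subseqPoly_zero (a : K) : subseqPoly a 0 = 1 := by
  simp [subseqPoly]

lemma subseqPoly_eval_self (a : K) (m : ℕ) : (subseqPoly a m).eval (m : K) = 1 := by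
  rw [subseqPoly_eval, sum_eq_single 0 (fun j _ hj => by simp [hj]) (by simp)]
  simp

lemma degree_sum_range_ascPochhammer_comp_lt (a : K) (m : ℕ) :
    (∑ j ∈ range m, C (a ^ j / j !) * (ascPochhammer K j).comp (X - C (m : K))).degree < m := by
  refine (degree_sum_le _ _).trans_lt ((Finset.sup_lt_iff (WithBot.bot_lt_coe m)).2 fun j hj => ?_)
  refine degree_le_natDegree.trans_lt ?_
  refine WithBot.coe_lt_coe.2 ((natDegree_C_mul_le _ _).trans_lt ?_)
  rw [natDegree_ascPochhammer_comp_X_sub_C]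
  exact mem_range.1 hj

variable [CharZero K]

lemma subseqPoly_succ_eval_add_one (a : K) (m : ℕ) (x : K) :
    (subseqPoly a (m + 1)).eval (x + 1) - (subseqPoly a (m + 1)).eval x
      = a * (subseqPoly a m).eval x := by
  have hterm (i : ℕ) : a ^ (i + 1) / (i + 1)! * ((i + 1) * (ascPochhammer K i).eval (x - m))
      = a * (a ^ i / i ! * (ascPochhammer K i).eval (x - m)) := by
    rw [Nat.factorial_succ]
    push_cast
    field_simp
    ring
  have hleft : x + 1 - ((m + 1 : ℕ) : K) = x - m := by push_cast; ring
  have hright : x - ((m + 1 : ℕ) : K) = x - m - 1 := by push_cast; ring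
  simp only [subseqPoly_eval, ← sum_sub_distrib, ← mul_sub, mul_sum, hleft, hright]
  rw [sum_range_succ']
  simp only [ascPochhammer_eval_sub_eval_sub_one, hterm]
  simp

lemma degree_subseqPoly_and_leadingCoeff {a : K} (ha : a ≠ 0) (m : ℕ) :
    (subseqPoly a m).degree = m ∧ (subseqPoly a m).leadingCoeff = a ^ m / m ! := by
  have hmonic := (monic_ascPochhammer K m).comp_X_sub_C (m : K)
  have hc : a ^ m / m ! ≠ 0 :=
    div_ne_zero (pow_ne_zero m ha) (Nat.cast_ne_zero.2 m.factorial_ne_zero)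
  have htop : (C (a ^ m / m !) * (ascPochhammer K m).comp (X - C (m : K))).degree = m := by
    rw [degree_C_mul hc, degree_eq_natDegree hmonic.ne_zero, natDegree_ascPochhammer_comp_X_sub_C]
  rw [subseqPoly, sum_range_succ, add_comm]
  have hlt := (degree_sum_range_ascPochhammer_comp_lt a m).trans_eq htop.symm
  refine ⟨(degree_add_eq_left_of_degree_lt hlt).trans htop, ?_⟩
  rw [leadingCoeff_add_of_degree_lt' hlt, leadingCoeff_mul, leadingCoeff_C, hmonic.leadingCoeff,
    mul_one]

theorem eq_subseqPoly_eval {f : ℕ → ℕ → K} (a : K) (hzero : ∀ n, f n 0 = 1)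
    (hdiag : ∀ n, f n n = 1)
    (hsucc : ∀ n m, m < n → f (n + 1) (m + 1) = f n (m + 1) + a * f n m)
    (n m : ℕ) (hmn : m ≤ n) : f n m = (subseqPoly a m).eval (n : K) := by
  induction n generalizing m with
  | zero => simp_all [subseqPoly_zero]
  | succ n ih =>
    rcases m with _ | m
    · simp [hzero, subseqPoly_zero]
    rcases (Nat.succ_le_succ_iff.1 hmn).eq_or_lt with rfl | hlt
    · rw [hdiag, subseqPoly_eval_self]
    rw [hsucc n m hlt, ih _ hlt, ih _ hlt.le, Nat.cast_succ,
      ← subseqPoly_succ_eval_add_one, add_sub_cancel]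

end

theorem stmt_14 (T : ℕ → ℕ → ℕ)
    (h0 : ∀ n, T n 0 = 2 ^ n) (hn : ∀ n, T n n = 2 ^ n)
    (hrec : ∀ n m, 1 ≤ m → m ≤ n - 1 → T n m = 2 * T (n - 1) (m - 1) + T (n - 1) m) :
    ∀ m : ℕ, ∃ q : Polynomial ℚ, q.degree = m ∧
      q.leadingCoeff = 1 / (2 ^ m * m.factorial) ∧
      ∀ n : ℕ, m ≤ n → (T n (n - m) : ℚ) / 2 ^ n = q.eval (n : ℚ) := by
  set f : ℕ → ℕ → ℚ := fun n m => (T n (n - m) : ℚ) / 2 ^ n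
  have hzero (n : ℕ) : f n 0 = 1 := by simp [f, hn]
  have hdiag (n : ℕ) : f n n = 1 := by simp [f, h0]
  have hsucc (n m : ℕ) (hmn : m < n) : f (n + 1) (m + 1) = f n (m + 1) + 2⁻¹ * f n m := by
    have hT := hrec (n + 1) (n - m) (by omega) (by omega)
    rw [show n - m - 1 = n - (m + 1) by omega, Nat.add_sub_cancel] at hT
    simp only [f, Nat.add_sub_add_right, hT]
    push_cast
    field_simp
    ring
  intro m
  obtain ⟨hdeg, hlead⟩ :=
    degree_subseqPoly_and_leadingCoeff (inv_ne_zero (two_ne_zero (α := ℚ))) m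
  refine ⟨subseqPoly 2⁻¹ m, hdeg, ?_, fun n => eq_subseqPoly_eval _ hzero hdiag hsucc n m⟩
  rw [hlead, inv_pow, div_eq_mul_inv, one_div, mul_inv]
end

section
/- For all n ≥ m ≥ 0, letting Ĉ(n, n−m) denote the expected number of distinct (n−m)-subsequences of a uniformly random binary string of length n, we have Ĉ(n, n−m) ≥ C(n,m)/2^m − c_m·n^{m-1} and Ĉ(n, n−m) ≤ C(n,m)/2^m + c_m·n^{m-1} for some constant c_m depending only on m. -/
/-- Expected number of distinct `k`-subsequences of a uniformly random
binary string of length `n`. -/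
noncomputable def Chat (n k : ℕ) : ℚ :=
  (∑ f : Fin n → Bool, (countM (List.ofFn f) k : ℚ)) / 2 ^ n

/-- Number of length-`n` binary supersequences of a fixed word, as a function
of `n` and the length of the word. -/
def Aux : ℕ → ℕ → ℕ
  | n, 0 => 2 ^ n
  | 0, _ + 1 => 0
  | n + 1, k + 1 => Aux n k + Aux n (k + 1)

/-- Number of length-`n` binary strings having `t` as a sublist. -/
def Nc (n : ℕ) (t : List Bool) : ℕ :=
  (Finset.univ.filter (fun f : Fin n → Bool => t.Sublist (List.ofFn f))).card

lemma Nc_nil (n : ℕ) : Nc n [] = 2 ^ n := by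
  simp [Nc, List.nil_sublist]

lemma Nc_zero_cons (a : Bool) (t : List Bool) : Nc 0 (a :: t) = 0 := by
  simp [Nc]

lemma cons_sublist_cons_of_ne {a b : Bool} (h : a ≠ b) (t s : List Bool) :
    (a :: t).Sublist (b :: s) ↔ (a :: t).Sublist s := by
  constructor
  · intro hs
    rcases List.sublist_cons_iff.mp hs with h' | ⟨r, hr, _⟩
    · exact h'
    · exact absurd (List.head_eq_of_cons_eq hr) h
  · intro hs
    exact hs.cons b

lemma Nc_succ (n : ℕ) (a : Bool) (t : List Bool) :
    Nc (n + 1) (a :: t) = Nc n t + Nc n (a :: t) := by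
  classical
  have h1 : Nc (n + 1) (a :: t)
      = ∑ p : Bool × (Fin n → Bool),
          if (a :: t).Sublist (p.1 :: List.ofFn p.2) then 1 else 0 := by
    rw [Nc, Finset.card_filter]
    refine Fintype.sum_equiv (Fin.consEquiv (fun _ => Bool)).symm _ _ ?_
    intro f
    congr 1
    simp only [List.ofFn_succ, Fin.consEquiv, eq_iff_iff, Equiv.coe_fn_symm_mk]
    exact Iff.rfl
  rw [h1, Fintype.sum_prod_type, Fintype.sum_bool]
  have hNt : ∀ s : List Bool → Prop, True := fun _ => trivial
  cases a
  · have h2 : (∑ g : Fin n → Bool,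
        if (false :: t).Sublist (true :: List.ofFn g) then 1 else 0) = Nc n (false :: t) := by
      rw [Nc, Finset.card_filter]
      refine Finset.sum_congr rfl fun g _ => ?_
      congr 1
      simp only [eq_iff_iff]
      exact cons_sublist_cons_of_ne (by simp) t (List.ofFn g)
    have h3 : (∑ g : Fin n → Bool,
        if (false :: t).Sublist (false :: List.ofFn g) then 1 else 0) = Nc n t := by
      rw [Nc, Finset.card_filter]
      refine Finset.sum_congr rfl fun g _ => ?_
      congr 1
      simp only [eq_iff_iff]
      exact List.cons_sublist_cons
    rw [h2, h3]
    ring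
  · have h2 : (∑ g : Fin n → Bool,
        if (true :: t).Sublist (true :: List.ofFn g) then 1 else 0) = Nc n t := by
      rw [Nc, Finset.card_filter]
      refine Finset.sum_congr rfl fun g _ => ?_
      congr 1
      simp only [eq_iff_iff]
      exact List.cons_sublist_cons
    have h3 : (∑ g : Fin n → Bool,
        if (true :: t).Sublist (false :: List.ofFn g) then 1 else 0) = Nc n (true :: t) := by
      rw [Nc, Finset.card_filter]
      refine Finset.sum_congr rfl fun g _ => ?_
      congr 1
      simp only [eq_iff_iff]
      exact cons_sublist_cons_of_ne (by simp) t (List.ofFn g)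
    rw [h2, h3]

lemma Nc_eq : ∀ (n : ℕ) (t : List Bool), Nc n t = Aux n t.length := by
  intro n
  induction n with
  | zero =>
    intro t
    cases t with
    | nil => simpa [Aux] using Nc_nil 0
    | cons a t => simp [Nc_zero_cons, Aux]
  | succ n ih =>
    intro t
    cases t with
    | nil => simp [Nc_nil, Aux]
    | cons a t => rw [Nc_succ, ih, ih]; simp [Aux]

lemma countM_eq (s : List Bool) (k : ℕ) :
    countM s k
      = (Finset.univ.filter (fun g : Fin k → Bool => (List.ofFn g).Sublist s)).card := by
  classical
  rw [countM, ← List.card_toFinset,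
    ← Finset.card_image_of_injective _ (List.ofFn_injective (α := Bool) (n := k))]
  congr 1
  ext t
  simp only [List.mem_toFinset, List.mem_filter, List.mem_sublists, Finset.mem_image,
    Finset.mem_filter, Finset.mem_univ, true_and, beq_iff_eq]
  constructor
  · rintro ⟨hsub, hlen⟩
    subst hlen
    exact ⟨t.get, by rw [List.ofFn_get]; exact hsub, List.ofFn_get t⟩
  · rintro ⟨g, hsub, rfl⟩
    exact ⟨hsub, by simp⟩

lemma sum_countM (n k : ℕ) :
    (∑ f : Fin n → Bool, countM (List.ofFn f) k) = 2 ^ k * Aux n k := by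
  classical
  have h1 : (∑ f : Fin n → Bool, countM (List.ofFn f) k)
      = ∑ f : Fin n → Bool, ∑ g : Fin k → Bool,
          if (List.ofFn g).Sublist (List.ofFn f) then 1 else 0 := by
    refine Finset.sum_congr rfl fun f _ => ?_
    rw [countM_eq, Finset.card_filter]
  rw [h1, Finset.sum_comm]
  have h2 : ∀ g : Fin k → Bool,
      (∑ f : Fin n → Bool, if (List.ofFn g).Sublist (List.ofFn f) then 1 else 0)
        = Aux n k := by
    intro g
    rw [Finset.sum_boole]
    have := Nc_eq n (List.ofFn g)
    rw [Nc] at this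
    simpa using this
  rw [Finset.sum_congr rfl fun g _ => h2 g]
  simp [Finset.card_univ, mul_comm]

lemma Aux_of_lt : ∀ n k : ℕ, n < k → Aux n k = 0 := by
  intro n
  induction n with
  | zero =>
    intro k hk
    match k, hk with
    | k + 1, _ => rfl
  | succ n ih =>
    intro k hk
    match k, hk with
    | k + 1, hk =>
      show Aux n k + Aux n (k + 1) = 0
      rw [ih k (by omega), ih (k + 1) (by omega)]

lemma Aux_self : ∀ n : ℕ, Aux n n = 1 := by
  intro n
  induction n with
  | zero => rfl
  | succ n ih =>
    show Aux n n + Aux n (n + 1) = 1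
    rw [ih, Aux_of_lt n (n + 1) (by omega)]

lemma pascal_sum (n m : ℕ) :
    ∑ i ∈ Finset.range (m + 1), (n + 1).choose i
      = ∑ i ∈ Finset.range (m + 1), n.choose i + ∑ i ∈ Finset.range m, n.choose i := by
  induction m with
  | zero => simp
  | succ m ih =>
    rw [Finset.sum_range_succ, ih, Finset.sum_range_succ (n := m + 1),
      Finset.sum_range_succ (f := fun i => n.choose i) (n := m)]
    have h := Nat.choose_succ_succ' n m
    omega

lemma Aux_eq (n : ℕ) : ∀ m : ℕ, m ≤ n → Aux n (n - m) = ∑ i ∈ Finset.range (m + 1), n.choose i := by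
  induction n with
  | zero =>
    intro m hm
    interval_cases m
    simp [Aux]
  | succ n ih =>
    intro m hm
    match m with
    | 0 =>
      simp only [Nat.sub_zero]
      rw [Aux_self]
      simp
    | m' + 1 =>
      by_cases hmn : m' + 1 ≤ n
      · have hsub : n + 1 - (m' + 1) = (n - (m' + 1)) + 1 := by omega
        rw [hsub]
        show Aux n (n - (m' + 1)) + Aux n (n - (m' + 1) + 1) = _
        have h2 : n - (m' + 1) + 1 = n - m' := by omega
        rw [h2, ih (m' + 1) hmn, ih m' (by omega), pascal_sum]
      · have hm' : m' + 1 = n + 1 := by omega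
        rw [hm']
        simp only [Nat.sub_self]
        show 2 ^ (n + 1) = _
        rw [Nat.sum_range_choose]

lemma Chat_eq (n m : ℕ) (h : m ≤ n) :
    Chat n (n - m) = (∑ i ∈ Finset.range (m + 1), (n.choose i : ℚ)) / 2 ^ m := by
  rw [Chat]
  have hs : (∑ f : Fin n → Bool, (countM (List.ofFn f) (n - m) : ℚ))
      = ((2 ^ (n - m) * Aux n (n - m) : ℕ) : ℚ) := by
    rw [← sum_countM n (n - m)]
    push_cast
    rfl
  rw [hs, Aux_eq n m h]
  have hn : (2 : ℚ) ^ n = 2 ^ (n - m) * 2 ^ m := by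
    rw [← pow_add]
    congr 1
    omega
  rw [hn]
  push_cast
  rw [mul_div_mul_left _ _ (by positivity : ((2:ℚ) ^ (n - m)) ≠ 0)]

theorem stmt_15 (m : ℕ) :
    ∃ c : ℚ, ∀ n : ℕ, m ≤ n →
      (n.choose m : ℚ) / 2 ^ m - c * (n : ℚ) ^ (m - 1) ≤ Chat n (n - m) ∧
      Chat n (n - m) ≤ (n.choose m : ℚ) / 2 ^ m + c * (n : ℚ) ^ (m - 1) := by
  refine ⟨(m : ℚ), fun n hmn => ?_⟩
  rw [Chat_eq n m hmn, Finset.sum_range_succ, add_div]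
  have hS0 : (0 : ℚ) ≤ (∑ i ∈ Finset.range m, (n.choose i : ℚ)) := by
    positivity
  have hpow0 : (0 : ℚ) ≤ (m : ℚ) * (n : ℚ) ^ (m - 1) := by positivity
  have h2m : (1 : ℚ) ≤ 2 ^ m := one_le_pow₀ (by norm_num)
  constructor
  · have : (0 : ℚ) ≤ (∑ i ∈ Finset.range m, (n.choose i : ℚ)) / 2 ^ m := by positivity
    linarith
  · have hkey : (∑ i ∈ Finset.range m, (n.choose i : ℚ)) ≤ (m : ℚ) * (n : ℚ) ^ (m - 1) := by
      have hnat : (∑ i ∈ Finset.range m, n.choose i) ≤ m * n ^ (m - 1) := by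
        rcases Nat.eq_zero_or_pos m with hm | hm
        · simp [hm]
        · have hn1 : 1 ≤ n := le_trans hm hmn
          calc (∑ i ∈ Finset.range m, n.choose i)
              ≤ ∑ i ∈ Finset.range m, n ^ (m - 1) := by
                refine Finset.sum_le_sum fun i hi => ?_
                have := Nat.choose_le_pow n i
                exact le_trans this (Nat.pow_le_pow_right hn1
                  (by have := Finset.mem_range.mp hi; omega))
            _ = m * n ^ (m - 1) := by rw [Finset.sum_const, Finset.card_range, smul_eq_mul]
      calc (∑ i ∈ Finset.range m, (n.choose i : ℚ))
          = ((∑ i ∈ Finset.range m, n.choose i : ℕ) : ℚ) := by push_cast; rfl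
        _ ≤ ((m * n ^ (m - 1) : ℕ) : ℚ) := by exact_mod_cast hnat
        _ = (m : ℚ) * (n : ℚ) ^ (m - 1) := by push_cast; rfl
    have hdiv : (∑ i ∈ Finset.range m, (n.choose i : ℚ)) / 2 ^ m
        ≤ (∑ i ∈ Finset.range m, (n.choose i : ℚ)) := by
      apply div_le_self hS0 h2m
    linarith
end
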